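/- Let F be a countable field of characteristic zero, let χ₁, …, χ_k be characters of the additive group of F, not all trivial, satisfying no non-trivial multiplicative relation (i.e., there are no a₁,…,a_k ∈ F, not all zero, with χ₁(a₁n)⋯χ_k(a_k n) = 1 for all n ∈ F). Let p₁, …, p_k ∈ F[x] be linearly independent polynomials with p_i(0) = 0, and let (Φ_N) be a Følner sequence in (F,+). Then (1/|Φ_N|) ∑_{n ∈ Φ_N} χ₁(p₁(n))⋯χ_k(p_k(n)) → 0. -/

import Mathlib

/-!
Expanding the polynomials, the summand is `n ↦ ∏_d ψ_d(n^d)`, where `ψ_d(t) = ∏_i χ_i(c_{i,d} t)`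
collects the degree-`d` coefficients `c_{i,d}` of the `p_i`; the absence of multiplicative
relations makes `ψ_d` non-trivial when `d` is the degree of a non-zero `p_i`. Induct on the top
degree `D` at which `ψ_D` is non-trivial. For `D = 1` the summand is a non-trivial character times
a constant, and shift invariance of Følner averages kills it. For `D > 1` the van der Corput
inequality reduces the claim to the correlations `n ↦ f(h+n) conj f(n)`, `h ≠ 0`; by the binomial
theorem these are again polynomial phases, with top coefficient `ψ_D(D h ·)` in degree `D - 1`,
non-trivial because `D h ≠ 0` in characteristic zero.
-/

open Filter Finset

def IsFolner {G : Type*} [AddCommGroup G] [DecidableEq G] (Φ : ℕ → Finset G) : Prop :=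
  (∀ N, (Φ N).Nonempty) ∧
  ∀ g : G, Tendsto
    (fun N => ((symmDiff (Φ N) ((Φ N).image (fun x => g + x))).card : ℝ) / (Φ N).card)
    atTop (nhds 0)

open Topology ComplexConjugate Polynomial
open scoped BigOperators

lemma AddChar.map_sum_eq_prod {ι A M : Type*} [AddCommMonoid A] [CommMonoid M]
    (ψ : AddChar A M) (s : Finset ι) (f : ι → A) : ψ (∑ i ∈ s, f i) = ∏ i ∈ s, ψ (f i) :=
  map_prod ψ.toMonoidHom (fun i ↦ Multiplicative.ofAdd (f i)) s

@[simp, norm_cast]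
lemma Circle.coe_prod {ι : Type*} (s : Finset ι) (f : ι → Circle) :
    ((∏ i ∈ s, f i : Circle) : ℂ) = ∏ i ∈ s, (f i : ℂ) :=
  map_prod Circle.coeHom f s

def AddChar.toCircle {A : Type*} [AddMonoid A] (χ : A → ℂ)
    (hhom : ∀ a b, χ (a + b) = χ a * χ b) (hmod : ∀ a, ‖χ a‖ = 1) : AddChar A Circle where
  toFun a := ⟨χ a, mem_sphere_zero_iff_norm.2 (hmod a)⟩
  map_zero_eq_one' := Circle.ext <| by
    have h0 : χ 0 ≠ 0 := norm_ne_zero_iff.1 (by rw [hmod]; exact one_ne_zero)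
    simpa [h0] using (hhom 0 0).symm
  map_add_eq_mul' a b := Circle.ext (hhom a b)

@[simp]
lemma AddChar.coe_toCircle_apply {A : Type*} [AddMonoid A] (χ : A → ℂ)
    (hhom : ∀ a b, χ (a + b) = χ a * χ b) (hmod : ∀ a, ‖χ a‖ = 1) (a : A) :
    (AddChar.toCircle χ hhom hmod a : ℂ) = χ a :=
  rfl

lemma add_pow_sub_pow_eq_sum {R : Type*} [CommRing R] (h n : R) (d : ℕ) :
    (h + n) ^ d - n ^ d = ∑ e ∈ range d, d.choose e * h ^ (d - e) * n ^ e := by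
  rw [add_comm, add_pow, sum_range_succ, Nat.sub_self, pow_zero, Nat.choose_self, Nat.cast_one,
    mul_one, mul_one, add_sub_cancel_right]
  exact sum_congr rfl fun e _ ↦ by ring

lemma norm_sum_sub_sum_le_card_symmDiff {α E : Type*} [DecidableEq α] [SeminormedAddCommGroup E]
    (s t : Finset α) {f : α → E} (hf : ∀ a, ‖f a‖ ≤ 1) :
    ‖∑ a ∈ t, f a - ∑ a ∈ s, f a‖ ≤ #(symmDiff s t) := by
  have bound : ∀ u : Finset α, ‖∑ a ∈ u, f a‖ ≤ #u := fun u ↦ by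
    simpa using norm_sum_le_of_le u fun a _ ↦ hf a
  rw [← sum_sdiff_sub_sum_sdiff, symmDiff_def, sup_eq_union,
    card_union_of_disjoint disjoint_sdiff_sdiff, Nat.cast_add, add_comm]
  exact (norm_sub_le _ _).trans (add_le_add (bound _) (bound _))

lemma norm_expect_sq_le_expect_norm_sq {α : Type*} {s : Finset α} (hs : s.Nonempty) (w : α → ℂ) :
    ‖𝔼 a ∈ s, w a‖ ^ 2 ≤ 𝔼 a ∈ s, ‖w a‖ ^ 2 := by
  calc ‖𝔼 a ∈ s, w a‖ ^ 2 ≤ (𝔼 a ∈ s, 1 * ‖w a‖) ^ 2 := by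
        simpa using pow_le_pow_left₀ (norm_nonneg _) (RCLike.norm_expect_le (K := ℂ)) 2
    _ ≤ (𝔼 a ∈ s, (1 : ℝ) ^ 2) * 𝔼 a ∈ s, ‖w a‖ ^ 2 := expect_mul_sq_le_sq_mul_sq _ _ _
    _ = 𝔼 a ∈ s, ‖w a‖ ^ 2 := by rw [one_pow, expect_const hs, one_mul]

lemma norm_expect_sum_sq_le {α ι : Type*} [DecidableEq ι] {s : Finset α} (hs : s.Nonempty)
    (t : Finset ι) {u : ι → α → ℂ} (hu : ∀ i a, ‖u i a‖ ≤ 1) :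
    ‖𝔼 a ∈ s, ∑ i ∈ t, u i a‖ ^ 2
      ≤ #t + ∑ i ∈ t, ∑ j ∈ t.erase i, ‖𝔼 a ∈ s, u i a * conj (u j a)‖ := by
  have h_sq : ∀ a, ((‖∑ i ∈ t, u i a‖ ^ 2 : ℝ) : ℂ) = ∑ i ∈ t, ∑ j ∈ t, u i a * conj (u j a) :=
    fun a ↦ by push_cast; rw [← Complex.mul_conj', map_sum, sum_mul_sum]
  have h_diag : ∀ i, ‖𝔼 a ∈ s, u i a * conj (u i a)‖ ≤ 1 := fun i ↦
    RCLike.norm_expect_le (K := ℂ).trans <| expect_le hs fun a _ ↦ by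
      simpa using mul_le_one₀ (hu i a) (norm_nonneg _) (hu i a)
  calc ‖𝔼 a ∈ s, ∑ i ∈ t, u i a‖ ^ 2 ≤ 𝔼 a ∈ s, ‖∑ i ∈ t, u i a‖ ^ 2 :=
        norm_expect_sq_le_expect_norm_sq hs _
    _ = ‖∑ i ∈ t, ∑ j ∈ t, 𝔼 a ∈ s, u i a * conj (u j a)‖ := by
        rw [← Real.norm_of_nonneg (expect_nonneg fun a _ ↦ by positivity), ← Complex.norm_real,
          Complex.ofReal_expect]
        simp only [h_sq, expect_sum_comm]
    _ ≤ ∑ i ∈ t, ∑ j ∈ t, ‖𝔼 a ∈ s, u i a * conj (u j a)‖ :=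
        (norm_sum_le _ _).trans (sum_le_sum fun i _ ↦ norm_sum_le _ _)
    _ = ∑ i ∈ t, (‖𝔼 a ∈ s, u i a * conj (u i a)‖
          + ∑ j ∈ t.erase i, ‖𝔼 a ∈ s, u i a * conj (u j a)‖) :=
        sum_congr rfl fun i hi ↦ (add_sum_erase _ _ hi).symm
    _ ≤ #t + ∑ i ∈ t, ∑ j ∈ t.erase i, ‖𝔼 a ∈ s, u i a * conj (u j a)‖ := by
        rw [sum_add_distrib]
        gcongr
        simpa using sum_le_sum fun i (_ : i ∈ t) ↦ h_diag i

section Folner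

variable {G : Type*} [AddCommGroup G] [DecidableEq G] {Φ : ℕ → Finset G}

lemma IsFolner.tendsto_expect_add_sub_expect (hΦ : IsFolner Φ) {f : G → ℂ}
    (hf : ∀ n, ‖f n‖ ≤ 1) (g : G) :
    Tendsto (fun N ↦ 𝔼 n ∈ Φ N, f (g + n) - 𝔼 n ∈ Φ N, f n) atTop (𝓝 0) := by
  refine squeeze_zero_norm (fun N ↦ ?_) (hΦ.2 g)
  have h_shift : ∑ n ∈ Φ N, f (g + n) = ∑ n ∈ (Φ N).image (g + ·), f n :=
    (sum_image fun _ _ _ _ ↦ add_left_cancel).symm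
  rw [expect_eq_sum_div_card, expect_eq_sum_div_card, div_sub_div_same, h_shift, norm_div,
    Complex.norm_natCast]
  gcongr
  exact norm_sum_sub_sum_le_card_symmDiff _ _ hf

lemma IsFolner.tendsto_expect_addChar (hΦ : IsFolner Φ) {ψ : AddChar G Circle} (hψ : ψ ≠ 1) :
    Tendsto (fun N ↦ 𝔼 n ∈ Φ N, (ψ n : ℂ)) atTop (𝓝 0) := by
  obtain ⟨g, hg⟩ := AddChar.ne_one_iff.1 hψ
  have hg' : (ψ g : ℂ) - 1 ≠ 0 := sub_ne_zero.2 (Circle.coe_eq_one.not.2 hg)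
  have h_shift : ∀ N, 𝔼 n ∈ Φ N, (ψ (g + n) : ℂ) - 𝔼 n ∈ Φ N, (ψ n : ℂ)
      = ((ψ g : ℂ) - 1) * 𝔼 n ∈ Φ N, (ψ n : ℂ) := fun N ↦ by
    simp only [AddChar.map_add_eq_mul, Circle.coe_mul, ← mul_expect]
    ring
  have := (hΦ.tendsto_expect_add_sub_expect (fun n ↦ (Circle.norm_coe (ψ n)).le) g).const_mul
    ((ψ g : ℂ) - 1)⁻¹
  simpa [h_shift, inv_mul_cancel_left₀ hg'] using this

lemma IsFolner.tendsto_expect_shift_mul_conj (hΦ : IsFolner Φ) {f : G → ℂ} (hf : ∀ n, ‖f n‖ ≤ 1)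
    (h : ∀ d ≠ 0, Tendsto (fun N ↦ 𝔼 n ∈ Φ N, f (d + n) * conj (f n)) atTop (𝓝 0))
    {a b : G} (hab : a ≠ b) :
    Tendsto (fun N ↦ 𝔼 n ∈ Φ N, f (a + n) * conj (f (b + n))) atTop (𝓝 0) := by
  set u : G → ℂ := fun n ↦ f (a - b + n) * conj (f n)
  have hu : ∀ n, ‖u n‖ ≤ 1 := fun n ↦ by
    simpa [u] using mul_le_one₀ (hf _) (norm_nonneg _) (hf n)
  have h_shift : ∀ n, f (a + n) * conj (f (b + n)) = u (b + n) := fun n ↦ by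
    simp only [u, show a - b + (b + n) = a + n by abel]
  have h_u : Tendsto (fun N ↦ 𝔼 n ∈ Φ N, u n) atTop (𝓝 0) := h _ (sub_ne_zero.2 hab)
  simpa only [h_shift, sub_add_cancel, add_zero] using
    (hΦ.tendsto_expect_add_sub_expect hu b).add h_u

theorem IsFolner.tendsto_expect_of_tendsto_correlation [Infinite G] (hΦ : IsFolner Φ)
    {f : G → ℂ} (hf : ∀ n, ‖f n‖ ≤ 1)
    (h : ∀ d ≠ 0, Tendsto (fun N ↦ 𝔼 n ∈ Φ N, f (d + n) * conj (f n)) atTop (𝓝 0)) :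
    Tendsto (fun N ↦ 𝔼 n ∈ Φ N, f n) atTop (𝓝 0) := by
  rw [NormedAddGroup.tendsto_nhds_zero]
  intro ε hε
  obtain ⟨m, hm⟩ := exists_nat_gt (8 / ε ^ 2)
  have hm0 : (0 : ℝ) < m := (by positivity : (0 : ℝ) < 8 / ε ^ 2).trans hm
  -- Replace `f` by its average over `m` distinct shifts: by Følner invariance this changes the
  -- averages by `o(1)`, and by Cauchy–Schwarz the new average has square at most `1/m` plus the
  -- off-diagonal correlations, which tend to `0`.
  set e := Infinite.natEmbedding G
  set B : ℕ → ℂ := fun N ↦ (m : ℂ)⁻¹ * 𝔼 n ∈ Φ N, ∑ i ∈ range m, f (e i + n)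
  set R : ℕ → ℝ := fun N ↦
    ∑ i ∈ range m, ∑ j ∈ (range m).erase i, ‖𝔼 n ∈ Φ N, f (e i + n) * conj (f (e j + n))‖
  have h_avg : Tendsto (fun N ↦ 𝔼 n ∈ Φ N, f n - B N) atTop (𝓝 0) := by
    have h_eq : ∀ N, 𝔼 n ∈ Φ N, f n - B N
        = -((m : ℂ)⁻¹ * ∑ i ∈ range m, (𝔼 n ∈ Φ N, f (e i + n) - 𝔼 n ∈ Φ N, f n)) := fun N ↦ by
      have : (m : ℂ) ≠ 0 := by exact_mod_cast hm0.ne'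
      simp only [B, expect_sum_comm, sum_sub_distrib, sum_const, card_range, nsmul_eq_mul]
      field_simp
      ring
    simpa [h_eq] using ((tendsto_finsetSum (range m) fun i _ ↦
      hΦ.tendsto_expect_add_sub_expect hf (e i)).const_mul (m : ℂ)⁻¹).neg
  have h_R : Tendsto R atTop (𝓝 0) := by
    simpa [R] using tendsto_finsetSum (range m) fun i _ ↦ tendsto_finsetSum _ fun j hj ↦
      (hΦ.tendsto_expect_shift_mul_conj hf h
        (e.injective.ne (ne_of_mem_erase hj).symm)).norm
  have h_B : ∀ N, ‖B N‖ ^ 2 ≤ (m + R N) / m ^ 2 := fun N ↦ by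
    rw [norm_mul, mul_pow, norm_inv, Complex.norm_natCast, inv_pow, inv_mul_eq_div]
    gcongr
    simpa using norm_expect_sum_sq_le (hΦ.1 N) (range m) (u := fun i n ↦ f (e i + n))
      fun i n ↦ hf _
  filter_upwards [NormedAddGroup.tendsto_nhds_zero.1 h_avg (ε / 2) (by positivity),
    h_R.eventually (gt_mem_nhds hm0)] with N h_avg_N h_R_N
  have h_B_N : ‖B N‖ < ε / 2 := by
    refine lt_of_pow_lt_pow_left₀ 2 (by positivity) ((h_B N).trans_lt ?_)
    rw [div_lt_iff₀ (by positivity)]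
    rw [div_lt_iff₀ (by positivity)] at hm
    nlinarith
  calc ‖𝔼 n ∈ Φ N, f n‖ ≤ ‖𝔼 n ∈ Φ N, f n - B N‖ + ‖B N‖ := norm_le_norm_sub_add _ _
    _ < ε := by linarith

end Folner

section PolyPhase

variable {R : Type*} [CommRing R]

noncomputable def polyPhase (ψ : ℕ → AddChar R Circle) (D : ℕ) (n : R) : Circle :=
  ∏ d ∈ range (D + 1), ψ d (n ^ d)

lemma polyPhase_one (ψ : ℕ → AddChar R Circle) (n : R) : polyPhase ψ 1 n = ψ 0 1 * ψ 1 n := by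
  simp [polyPhase, prod_range_succ]

lemma polyPhase_succ_of_eq_one {ψ : ℕ → AddChar R Circle} {D : ℕ} (hψ : ψ (D + 1) = 1) :
    polyPhase ψ (D + 1) = polyPhase ψ D := by
  ext1 n
  rw [polyPhase, prod_range_succ, hψ, AddChar.one_apply, mul_one, polyPhase]

noncomputable def diffChar (ψ : ℕ → AddChar R Circle) (D : ℕ) (h : R) (e : ℕ) : AddChar R Circle :=
  ∏ d ∈ Ioc e D, (ψ d).mulShift (d.choose e * h ^ (d - e))

lemma polyPhase_add_div (ψ : ℕ → AddChar R Circle) (D : ℕ) (h n : R) :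
    polyPhase ψ (D + 1) (h + n) / polyPhase ψ (D + 1) n = polyPhase (diffChar ψ (D + 1) h) D n := by
  calc polyPhase ψ (D + 1) (h + n) / polyPhase ψ (D + 1) n
      = ∏ d ∈ range (D + 2), ∏ e ∈ range d, ψ d (d.choose e * h ^ (d - e) * n ^ e) := by
        simp only [polyPhase, ← prod_div_distrib, ← AddChar.map_sub_eq_div,
          add_pow_sub_pow_eq_sum, AddChar.map_sum_eq_prod]
    _ = ∏ e ∈ range (D + 1), ∏ d ∈ Ioc e (D + 1), ψ d (d.choose e * h ^ (d - e) * n ^ e) :=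
        prod_comm' fun d e ↦ by simp only [mem_range, mem_Ioc]; omega
    _ = polyPhase (diffChar ψ (D + 1) h) D n := by
        simp only [polyPhase, diffChar, AddChar.prod_apply, AddChar.mulShift_apply, mul_assoc]

lemma diffChar_ne_one {F : Type*} [Field F] [CharZero F] {ψ : ℕ → AddChar F Circle} {D : ℕ}
    (hψ : ψ (D + 1) ≠ 1) {h : F} (hh : h ≠ 0) : diffChar ψ (D + 1) h D ≠ 1 := by
  have h_unit : IsUnit (((D + 1).choose D : F) * h ^ (D + 1 - D)) := by
    simp [Nat.choose_succ_self_right, hh, Nat.cast_add_one_ne_zero]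
  rwa [diffChar, Nat.Ioc_succ_singleton, prod_singleton, Ne,
    AddChar.mulShift_unit_eq_one_iff _ h_unit]

end PolyPhase

theorem IsFolner.tendsto_expect_polyPhase {F : Type*} [Field F] [CharZero F] [DecidableEq F]
    {Φ : ℕ → Finset F} (hΦ : IsFolner Φ) (D : ℕ) (ψ : ℕ → AddChar F Circle)
    (hψ : ∃ d ∈ Icc 1 D, ψ d ≠ 1) :
    Tendsto (fun N ↦ 𝔼 n ∈ Φ N, (polyPhase ψ D n : ℂ)) atTop (𝓝 0) := by
  induction D generalizing ψ with
  | zero => simp at hψ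
  | succ M ih =>
    by_cases h_top : ψ (M + 1) = 1
    · obtain ⟨d, hd, hψd⟩ := hψ
      have hdM : d ≠ M + 1 := by rintro rfl; exact hψd h_top
      rw [polyPhase_succ_of_eq_one h_top]
      exact ih ψ ⟨d, by simp only [mem_Icc] at hd ⊢; omega, hψd⟩
    rcases Nat.eq_zero_or_pos M with rfl | hM
    · simpa [polyPhase_one, ← mul_expect] using
        (hΦ.tendsto_expect_addChar h_top).const_mul (ψ 0 1 : ℂ)
    refine hΦ.tendsto_expect_of_tendsto_correlation (fun n ↦ (Circle.norm_coe _).le)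
      fun h hh ↦ ?_
    have h_corr : ∀ n, (polyPhase ψ (M + 1) (h + n) : ℂ) * conj (polyPhase ψ (M + 1) n : ℂ)
        = polyPhase (diffChar ψ (M + 1) h) M n := fun n ↦ by
      rw [← polyPhase_add_div, div_eq_mul_inv, Circle.coe_mul, Circle.coe_inv_eq_conj]
    simpa only [h_corr] using ih _ ⟨M, by simp only [mem_Icc]; omega, diffChar_ne_one h_top hh⟩

section CoeffChar

variable {R ι : Type*} [CommRing R] [Fintype ι]

noncomputable def coeffChar (χ : ι → AddChar R Circle) (p : ι → R[X]) (d : ℕ) : AddChar R Circle :=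
  ∏ i, (χ i).mulShift ((p i).coeff d)

lemma prod_eval_eq_polyPhase (χ : ι → AddChar R Circle) (p : ι → R[X]) {M : ℕ}
    (hM : ∀ i, (p i).natDegree ≤ M) (n : R) :
    ∏ i, χ i ((p i).eval n) = polyPhase (coeffChar χ p) M n := by
  simp only [eval_eq_sum_range' (Nat.lt_succ_of_le (hM _)), AddChar.map_sum_eq_prod]
  rw [Finset.prod_comm]
  simp only [polyPhase, coeffChar, AddChar.prod_apply, AddChar.mulShift_apply]

lemma coeffChar_natDegree_ne_one {χ : ι → AddChar R Circle}
    (hχ : ∀ a : ι → R, ∏ i, (χ i).mulShift (a i) = 1 → a = 0) {p : ι → R[X]} {i : ι}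
    (hp : p i ≠ 0) : coeffChar χ p (p i).natDegree ≠ 1 :=
  fun h ↦ hp (leadingCoeff_eq_zero.1 (congrFun (hχ _ h) i))

end CoeffChar

theorem stmt5_general {F : Type*} [Field F] [CharZero F] [DecidableEq F]
    (k : ℕ) (χ : Fin k → F → ℂ)
    (hhom : ∀ i a b, χ i (a + b) = χ i a * χ i b) (hmod : ∀ i a, ‖χ i a‖ = 1)
    (hnontriv : ∃ i g, χ i g ≠ 1)
    (hnorel : ∀ a : Fin k → F, (∀ n, ∏ i, χ i (a i * n) = 1) → a = 0)
    (p : Fin k → Polynomial F) (hli : LinearIndependent F p)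
    (hp0 : ∀ i, (p i).eval 0 = 0)
    (Φ : ℕ → Finset F) (hΦ : IsFolner Φ) :
    Tendsto (fun N => (∑ n ∈ Φ N, ∏ i, χ i ((p i).eval n)) / ((Φ N).card : ℂ))
      atTop (nhds 0) := by
  set ψ := fun i ↦ AddChar.toCircle (χ i) (hhom i) (hmod i)
  obtain ⟨i₀, -⟩ := hnontriv
  have hp : p i₀ ≠ 0 := hli.ne_zero i₀
  set M := univ.sup fun i ↦ (p i).natDegree
  have hM : ∀ i, (p i).natDegree ≤ M := fun i ↦ le_sup (f := fun i ↦ (p i).natDegree) (mem_univ i)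
  have hrel : ∀ a : Fin k → F, ∏ i, (ψ i).mulShift (a i) = 1 → a = 0 := fun a ha ↦
    hnorel a fun n ↦ by
      simpa [ψ] using congrArg (fun φ ↦ (φ n : ℂ)) ha
  have hdeg : 1 ≤ (p i₀).natDegree := by
    refine Nat.one_le_iff_ne_zero.2 fun h0 ↦ hp ?_
    rw [eq_C_of_natDegree_eq_zero h0, coeff_zero_eq_eval_zero, hp0, map_zero]
  have h_eq : ∀ n, ∏ i, χ i ((p i).eval n) = (polyPhase (coeffChar ψ p) M n : ℂ) := fun n ↦ by
    simp [← prod_eval_eq_polyPhase ψ p hM, ψ]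
  simp_rw [← expect_eq_sum_div_card, h_eq]
  exact hΦ.tendsto_expect_polyPhase M _
    ⟨_, mem_Icc.2 ⟨hdeg, hM i₀⟩, coeffChar_natDegree_ne_one hrel hp⟩

/-- Equidistribution: for characters `χ₁,…,χ_k` of `(F,+)` (F a countable field of
characteristic zero), not all trivial and satisfying no non-trivial multiplicative
relation, and linearly independent polynomials `p₁,…,p_k` vanishing at `0`, the averages
`E_{n∈Φ_N} χ₁(p₁(n))⋯χ_k(p_k(n))` converge to `0` along any Følner sequence. -/
theorem stmt5 {F : Type*} [Field F] [CharZero F] [Countable F] [DecidableEq F]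
    (k : ℕ) (χ : Fin k → F → ℂ)
    (hhom : ∀ i a b, χ i (a + b) = χ i a * χ i b) (hmod : ∀ i a, ‖χ i a‖ = 1)
    (hnontriv : ∃ i g, χ i g ≠ 1)
    (hnorel : ∀ a : Fin k → F, (∀ n, ∏ i, χ i (a i * n) = 1) → a = 0)
    (p : Fin k → Polynomial F) (hli : LinearIndependent F p)
    (hp0 : ∀ i, (p i).eval 0 = 0)
    (Φ : ℕ → Finset F) (hΦ : IsFolner Φ) :
    Tendsto (fun N => (∑ n ∈ Φ N, ∏ i, χ i ((p i).eval n)) / ((Φ N).card : ℂ))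
      atTop (nhds 0) :=
  stmt5_general k χ hhom hmod hnontriv hnorel p hli hp0 Φ hΦ
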